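/- arXiv:2302.00368 — 6 statements merged into one kernel-verified Lean document; each statement's English description precedes it below -/
import Mathlib

section
/- Let Q = (q_1,...,q_n) and R = (r_1,...,r_m) be probability vectors with parent map p, let g ∈ {1,...,n} be the ground-truth fine class, and suppose r_{p(g)} = max_k r_k (the coarse classifier correctly predicts the parent of g). Define the ensemble score s_i = q_i · r_{p(i)} / (∑_j q_j · r_{p(j)}), assuming the denominator is positive. Then s_g ≥ q_g. -/
open Finset

theorem Finset.sum_mul_le_of_sum_eq_one {ι R : Type*} [Semiring R] [PartialOrder R]
    [IsOrderedRing R] {s : Finset ι} {w f : ι → R} {M : R}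
    (hw : ∀ i ∈ s, 0 ≤ w i) (hw1 : ∑ i ∈ s, w i = 1) (hf : ∀ i ∈ s, f i ≤ M) :
    ∑ i ∈ s, w i * f i ≤ M :=
  calc ∑ i ∈ s, w i * f i ≤ ∑ i ∈ s, w i * M :=
        sum_le_sum fun i hi => mul_le_mul_of_nonneg_left (hf i hi) (hw i hi)
    _ = M := by rw [← sum_mul, hw1, one_mul]

theorem hie_theorem1_general {n m : ℕ} (q : Fin n → ℝ) (r : Fin m → ℝ)
    (p : Fin n → Fin m) (g : Fin n)
    (hne : (univ : Finset (Fin m)).Nonempty)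
    (hq0 : ∀ j, 0 ≤ q j)
    (hq1 : ∑ j, q j = 1)
    (hmax : r (p g) = univ.sup' hne r)
    (hD : 0 < ∑ j, q j * r (p j)) :
    q g * r (p g) / (∑ j, q j * r (p j)) ≥ q g := by
  have hD_le : ∑ j, q j * r (p j) ≤ r (p g) :=
    sum_mul_le_of_sum_eq_one (fun j _ => hq0 j) hq1 fun j _ => hmax ▸ le_sup' r (mem_univ _)
  rw [ge_iff_le, le_div_iff₀ hD]
  exact mul_le_mul_of_nonneg_left hD_le (hq0 g)

theorem hie_theorem1 {n m : ℕ} (q : Fin n → ℝ) (r : Fin m → ℝ)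
    (p : Fin n → Fin m) (g : Fin n)
    (hne : (univ : Finset (Fin m)).Nonempty)
    (hq0 : ∀ j, 0 ≤ q j) (hr0 : ∀ k, 0 ≤ r k)
    (hq1 : ∑ j, q j = 1) (hr1 : ∑ k, r k = 1)
    (hmax : r (p g) = univ.sup' hne r)
    (hD : 0 < ∑ j, q j * r (p j)) :
    q g * r (p g) / (∑ j, q j * r (p j)) ≥ q g :=
  hie_theorem1_general q r p g hne hq0 hq1 hmax hD
end

section
/- Let Q, R be probability vectors with parent map p, ground truth g with q_g > 0, and positive denominator D. Suppose r_{p(g)} = max_k r_k. Then equality s_g = q_g holds if and only if every fine class j with q_j > 0 satisfies r_{p(j)} = r_{p(g)}. -/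
/-! Cancelling `q g` turns `s_g = q_g` into `D = r (p g)`. But `D` is the `q`-weighted average
of the values `r (p j)`, all at most `r (p g)`, and a weighted average reaches an upper bound
exactly when every point of positive weight attains it. -/

open Finset

theorem Finset.sum_mul_eq_iff_of_le {ι K : Type*} [CommRing K] [LinearOrder K]
    [IsStrictOrderedRing K] {s : Finset ι} {w f : ι → K} {M : K}
    (hw0 : ∀ i ∈ s, 0 ≤ w i) (hw1 : ∑ i ∈ s, w i = 1) (hf : ∀ i ∈ s, f i ≤ M) :
    ∑ i ∈ s, w i * f i = M ↔ ∀ i ∈ s, 0 < w i → f i = M := by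
  have hgap : M - ∑ i ∈ s, w i * f i = ∑ i ∈ s, w i * (M - f i) := by
    simp only [mul_sub, sum_sub_distrib, ← sum_mul, hw1, one_mul]
  rw [eq_comm, ← sub_eq_zero, hgap,
    sum_eq_zero_iff_of_nonneg fun i hi => mul_nonneg (hw0 i hi) (sub_nonneg.2 (hf i hi))]
  refine forall₂_congr fun i hi => ?_
  rw [mul_eq_zero, sub_eq_zero, eq_comm (a := M), (hw0 i hi).lt_iff_ne', or_iff_not_imp_left]

theorem hie_equality_case_general {n m : ℕ} (q : Fin n → ℝ) (r : Fin m → ℝ)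
    (p : Fin n → Fin m) (g : Fin n)
    (hne : (univ : Finset (Fin m)).Nonempty)
    (hq0 : ∀ j, 0 ≤ q j)
    (hq1 : ∑ j, q j = 1)
    (hqg : 0 < q g)
    (hD : 0 < ∑ j, q j * r (p j))
    (hmax : r (p g) = univ.sup' hne r) :
    q g * r (p g) / (∑ j, q j * r (p j)) = q g ↔
      ∀ j, 0 < q j → r (p j) = r (p g) := by
  have hle : ∀ j ∈ univ, r (p j) ≤ r (p g) := fun j _ => hmax ▸ le_sup' r (mem_univ (p j))
  rw [div_eq_iff hD.ne', mul_right_inj' hqg.ne', eq_comm,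
    sum_mul_eq_iff_of_le (fun j _ => hq0 j) hq1 hle]
  simp only [mem_univ, true_implies]

theorem hie_equality_case {n m : ℕ} (q : Fin n → ℝ) (r : Fin m → ℝ)
    (p : Fin n → Fin m) (g : Fin n)
    (hne : (univ : Finset (Fin m)).Nonempty)
    (hq0 : ∀ j, 0 ≤ q j) (hr0 : ∀ k, 0 ≤ r k)
    (hq1 : ∑ j, q j = 1) (hr1 : ∑ k, r k = 1)
    (hqg : 0 < q g)
    (hD : 0 < ∑ j, q j * r (p j))
    (hmax : r (p g) = univ.sup' hne r) :
    q g * r (p g) / (∑ j, q j * r (p j)) = q g ↔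
      ∀ j, 0 < q j → r (p j) = r (p g) :=
  hie_equality_case_general q r p g hne hq0 hq1 hqg hD hmax
end

section
/- Let Q, R be probability vectors with parent map p and ground truth g. If the coarse prediction is wrong in the strong sense that r_{p(g)} = min_k r_k, then the ensemble score cannot exceed the original fine score: s_g = q_g · r_{p(g)} / D ≤ q_g, where D = ∑_j q_j · r_{p(j)} > 0. -/
open Finset

theorem le_sum_mul_of_forall_le {ι R : Type*} [Semiring R] [PartialOrder R] [IsOrderedRing R]
    (s : Finset ι) {w f : ι → R} {c : R} (hw0 : ∀ i ∈ s, 0 ≤ w i) (hw1 : ∑ i ∈ s, w i = 1)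
    (hc : ∀ i ∈ s, c ≤ f i) : c ≤ ∑ i ∈ s, w i * f i :=
  calc c = ∑ i ∈ s, w i * c := by rw [← sum_mul, hw1, one_mul]
    _ ≤ ∑ i ∈ s, w i * f i :=
      sum_le_sum fun i hi => mul_le_mul_of_nonneg_left (hc i hi) (hw0 i hi)

theorem hie_min_coarse_hurts_general {n m : ℕ} (q : Fin n → ℝ) (r : Fin m → ℝ)
    (p : Fin n → Fin m) (g : Fin n)
    (hne : (univ : Finset (Fin m)).Nonempty)
    (hq0 : ∀ j, 0 ≤ q j)
    (hq1 : ∑ j, q j = 1)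
    (hmin : r (p g) = univ.inf' hne r)
    (hD : 0 < ∑ j, q j * r (p j)) :
    q g * r (p g) / (∑ j, q j * r (p j)) ≤ q g := by
  have hle : r (p g) ≤ ∑ j, q j * r (p j) :=
    le_sum_mul_of_forall_le univ (fun j _ => hq0 j) hq1
      fun j _ => hmin ▸ inf'_le r (mem_univ (p j))
  rw [mul_div_assoc]
  exact mul_le_of_le_one_right (hq0 g) ((div_le_one hD).2 hle)

theorem hie_min_coarse_hurts {n m : ℕ} (q : Fin n → ℝ) (r : Fin m → ℝ)
    (p : Fin n → Fin m) (g : Fin n)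
    (hne : (univ : Finset (Fin m)).Nonempty)
    (hq0 : ∀ j, 0 ≤ q j) (hr0 : ∀ k, 0 ≤ r k)
    (hq1 : ∑ j, q j = 1) (hr1 : ∑ k, r k = 1)
    (hmin : r (p g) = univ.inf' hne r)
    (hD : 0 < ∑ j, q j * r (p j)) :
    q g * r (p g) / (∑ j, q j * r (p j)) ≤ q g :=
  hie_min_coarse_hurts_general q r p g hne hq0 hq1 hmin hD
end

section
/- Consider a two-level hierarchy given by parent maps p₁ : {1,...,n} → {1,...,m} (fine to middle) and p₂ : {1,...,m} → {1,...,t} (middle to top), with probability vectors Q, R, T at the three levels. Define cascaded ensemble scores s_i proportional to q_i · r_{p₁(i)} · t_{p₂(p₁(i))}, normalized to sum to 1 (assuming the normalizer is positive). If the ground-truth fine class g satisfies r_{p₁(g)} = max_k r_k and t_{p₂(p₁(g))} = max_l t_l, then s_g ≥ q_g. -/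
/-! The cascaded weight `w j = r (p₁ j) * tv (p₂ (p₁ j))` is maximal at `g`, so the normaliser
`∑ j, q j * w j`, a `q`-average of `w`, is at most `w g`. -/

open Finset

section WeightedAverage

variable {ι : Type*} [Fintype ι] {q w : ι → ℝ}

theorem sum_mul_le_of_forall_le (hq0 : ∀ j, 0 ≤ q j) (hq1 : ∑ j, q j = 1) {M : ℝ}
    (hw : ∀ j, w j ≤ M) : ∑ j, q j * w j ≤ M :=
  calc ∑ j, q j * w j ≤ ∑ j, q j * M :=
        sum_le_sum fun j _ => mul_le_mul_of_nonneg_left (hw j) (hq0 j)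
    _ = M := by rw [← sum_mul, hq1, one_mul]

theorem le_mul_div_sum_mul_of_forall_le (hq0 : ∀ j, 0 ≤ q j) (hq1 : ∑ j, q j = 1) {g : ι}
    (hwg : ∀ j, w j ≤ w g) (hD : 0 < ∑ j, q j * w j) :
    q g ≤ q g * w g / ∑ j, q j * w j := by
  rw [le_div_iff₀ hD]
  exact mul_le_mul_of_nonneg_left (sum_mul_le_of_forall_le hq0 hq1 hwg) (hq0 g)

end WeightedAverage

theorem hie_cascaded_theorem1_general {n m t : ℕ} (q : Fin n → ℝ) (r : Fin m → ℝ)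
    (tv : Fin t → ℝ) (p₁ : Fin n → Fin m) (p₂ : Fin m → Fin t) (g : Fin n)
    (hnem : (univ : Finset (Fin m)).Nonempty)
    (hnet : (univ : Finset (Fin t)).Nonempty)
    (hq0 : ∀ j, 0 ≤ q j) (hr0 : ∀ k, 0 ≤ r k) (ht0 : ∀ l, 0 ≤ tv l)
    (hq1 : ∑ j, q j = 1)
    (hmaxr : r (p₁ g) = univ.sup' hnem r)
    (hmaxt : tv (p₂ (p₁ g)) = univ.sup' hnet tv)
    (hD : 0 < ∑ j, q j * r (p₁ j) * tv (p₂ (p₁ j))) :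
    q g * r (p₁ g) * tv (p₂ (p₁ g)) / (∑ j, q j * r (p₁ j) * tv (p₂ (p₁ j))) ≥
      q g := by
  have hr : ∀ k, r k ≤ r (p₁ g) := fun k => hmaxr ▸ le_sup' r (mem_univ k)
  have ht : ∀ l, tv l ≤ tv (p₂ (p₁ g)) := fun l => hmaxt ▸ le_sup' tv (mem_univ l)
  have hwg : ∀ j, r (p₁ j) * tv (p₂ (p₁ j)) ≤ r (p₁ g) * tv (p₂ (p₁ g)) := fun j =>
    mul_le_mul (hr _) (ht _) (ht0 _) (hr0 _)
  simp only [mul_assoc] at hD ⊢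
  exact le_mul_div_sum_mul_of_forall_le hq0 hq1 hwg hD

theorem hie_cascaded_theorem1 {n m t : ℕ} (q : Fin n → ℝ) (r : Fin m → ℝ)
    (tv : Fin t → ℝ) (p₁ : Fin n → Fin m) (p₂ : Fin m → Fin t) (g : Fin n)
    (hnem : (univ : Finset (Fin m)).Nonempty)
    (hnet : (univ : Finset (Fin t)).Nonempty)
    (hq0 : ∀ j, 0 ≤ q j) (hr0 : ∀ k, 0 ≤ r k) (ht0 : ∀ l, 0 ≤ tv l)
    (hq1 : ∑ j, q j = 1) (hr1 : ∑ k, r k = 1) (ht1 : ∑ l, tv l = 1)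
    (hmaxr : r (p₁ g) = univ.sup' hnem r)
    (hmaxt : tv (p₂ (p₁ g)) = univ.sup' hnet tv)
    (hD : 0 < ∑ j, q j * r (p₁ j) * tv (p₂ (p₁ j))) :
    q g * r (p₁ g) * tv (p₂ (p₁ g)) / (∑ j, q j * r (p₁ j) * tv (p₂ (p₁ j))) ≥
      q g :=
  hie_cascaded_theorem1_general q r tv p₁ p₂ g hnem hnet hq0 hr0 ht0 hq1 hmaxr hmaxt hD
end

section
/- Let Q, R be probability vectors with parent map p, ground truth g, and positive denominator D = ∑_j q_j · r_{p(j)}. Suppose r_{p(g)} = max_k r_k. Define z_k = ∑_{j:p(j)=k} q_j. Then the multiplicative gain of the ensemble on the true class satisfies s_g / q_g = r_{p(g)} / (∑_k r_k z_k) ≥ r_{p(g)} / (z_{p(g)} · r_{p(g)} + (1 − z_{p(g)}) · r_{p(g)}) = 1, and more precisely s_g / q_g ≥ 1 / (z_{p(g)} + (1 − z_{p(g)}) · r' / r_{p(g)}) where r' = max_{k ≠ p(g)} r_k, provided q_g > 0. -/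
/-!
Grouping the fine classes by their parent turns the normaliser into the average
`D = ∑ₖ rₖ zₖ` of the coarse probabilities against the coarse masses `zₖ`, so the gain
`s_g / q_g` is `r_{p(g)} / D`. Every competing class has `rₖ ≤ r'`, hence
`D ≤ z_{p(g)} r_{p(g)} + (1 - z_{p(g)}) r'`; the same bound with `r_{p(g)}` in place of `r'`
gives `D ≤ r_{p(g)}`.
-/

open Finset

theorem sum_mul_comp_eq_sum_mul_sum_fiberwise {ι κ R : Type*} [Fintype ι] [Fintype κ]
    [DecidableEq κ] [CommSemiring R] (q : ι → R) (r : κ → R) (p : ι → κ) :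
    ∑ j, q j * r (p j) = ∑ k, r k * ∑ j ∈ univ.filter (fun j => p j = k), q j := by
  rw [← sum_fiberwise univ p]
  refine sum_congr rfl fun k _ => ?_
  rw [mul_sum]
  refine sum_congr rfl fun j hj => ?_
  rw [(mem_filter.mp hj).2, mul_comm]

theorem sum_mul_le_mul_add_one_sub_mul {ι R : Type*} [DecidableEq ι] [CommRing R]
    [PartialOrder R] [IsOrderedRing R] {s : Finset ι} {k₀ : ι} (hk₀ : k₀ ∈ s)
    {r z : ι → R} {M : R} (hz : ∀ k ∈ s, 0 ≤ z k) (hz1 : ∑ k ∈ s, z k = 1)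
    (hM : ∀ k ∈ s.erase k₀, r k ≤ M) :
    ∑ k ∈ s, r k * z k ≤ z k₀ * r k₀ + (1 - z k₀) * M := by
  have hrest : ∑ k ∈ s.erase k₀, z k = 1 - z k₀ := by
    rw [← hz1, ← add_sum_erase s z hk₀, add_sub_cancel_left]
  calc ∑ k ∈ s, r k * z k = r k₀ * z k₀ + ∑ k ∈ s.erase k₀, r k * z k :=
        (add_sum_erase s _ hk₀).symm
    _ ≤ r k₀ * z k₀ + ∑ k ∈ s.erase k₀, M * z k := by
        gcongr with k hk
        · exact hz k (mem_of_mem_erase hk)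
        · exact hM k hk
    _ = z k₀ * r k₀ + (1 - z k₀) * M := by rw [← mul_sum, hrest]; ring

theorem hie_multiplicative_gain_general {n m : ℕ} (q : Fin n → ℝ) (r : Fin m → ℝ)
    (p : Fin n → Fin m) (g : Fin n)
    (hne : (univ : Finset (Fin m)).Nonempty)
    (hne' : ((univ : Finset (Fin m)).erase (p g)).Nonempty)
    (hq0 : ∀ j, 0 ≤ q j)
    (hq1 : ∑ j, q j = 1)
    (hmax : r (p g) = univ.sup' hne r)
    (hD : 0 < ∑ j, q j * r (p j))
    (hqg : 0 < q g) :
    (q g * r (p g) / (∑ j, q j * r (p j))) / q g =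
        r (p g) / (∑ k, r k * ∑ j ∈ univ.filter (fun j => p j = k), q j) ∧
      (q g * r (p g) / (∑ j, q j * r (p j))) / q g ≥ 1 ∧
      (q g * r (p g) / (∑ j, q j * r (p j))) / q g ≥
        1 / ((∑ j ∈ univ.filter (fun j => p j = p g), q j) +
          (1 - ∑ j ∈ univ.filter (fun j => p j = p g), q j) *
            (((univ : Finset (Fin m)).erase (p g)).sup' hne' r) / r (p g)) := by
  set D := ∑ j, q j * r (p j)
  set z : Fin m → ℝ := fun k => ∑ j ∈ univ.filter (fun j => p j = k), q j
  set r' := ((univ : Finset (Fin m)).erase (p g)).sup' hne' r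
  have hgain : (q g * r (p g) / D) / q g = r (p g) / D := by
    rw [mul_div_assoc, mul_div_cancel_left₀ _ hqg.ne']
  have hDz : D = ∑ k, r k * z k := sum_mul_comp_eq_sum_mul_sum_fiberwise q r p
  have hz0 : ∀ k ∈ univ, 0 ≤ z k := fun k _ => sum_nonneg fun j _ => hq0 j
  have hz1 : ∑ k, z k = 1 := by rw [sum_fiberwise, hq1]
  have hD_le_r' : D ≤ z (p g) * r (p g) + (1 - z (p g)) * r' :=
    hDz ▸ sum_mul_le_mul_add_one_sub_mul (mem_univ _) hz0 hz1 fun k hk => le_sup' r hk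
  have hD_le : D ≤ r (p g) := by
    have h := sum_mul_le_mul_add_one_sub_mul (mem_univ (p g)) hz0 hz1
      (M := r (p g)) fun k _ => hmax ▸ le_sup' r (mem_univ k)
    rw [← hDz] at h
    linarith
  have hr : 0 < r (p g) := hD.trans_le hD_le
  refine ⟨by rw [hgain, hDz], ?_, ?_⟩
  · rw [hgain, ge_iff_le, one_le_div hD]
    exact hD_le
  · have hcommon : z (p g) + (1 - z (p g)) * r' / r (p g) =
        (z (p g) * r (p g) + (1 - z (p g)) * r') / r (p g) := by
      field_simp
    rw [hgain, ge_iff_le, hcommon, one_div_div]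
    exact div_le_div_of_nonneg_left hr.le hD hD_le_r'

theorem hie_multiplicative_gain {n m : ℕ} (q : Fin n → ℝ) (r : Fin m → ℝ)
    (p : Fin n → Fin m) (g : Fin n)
    (hne : (univ : Finset (Fin m)).Nonempty)
    (hne' : ((univ : Finset (Fin m)).erase (p g)).Nonempty)
    (hq0 : ∀ j, 0 ≤ q j) (hr0 : ∀ k, 0 ≤ r k)
    (hq1 : ∑ j, q j = 1) (hr1 : ∑ k, r k = 1)
    (hmax : r (p g) = univ.sup' hne r)
    (hD : 0 < ∑ j, q j * r (p j))
    (hqg : 0 < q g) :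
    (q g * r (p g) / (∑ j, q j * r (p j))) / q g =
        r (p g) / (∑ k, r k * ∑ j ∈ univ.filter (fun j => p j = k), q j) ∧
      (q g * r (p g) / (∑ j, q j * r (p j))) / q g ≥ 1 ∧
      (q g * r (p g) / (∑ j, q j * r (p j))) / q g ≥
        1 / ((∑ j ∈ univ.filter (fun j => p j = p g), q j) +
          (1 - ∑ j ∈ univ.filter (fun j => p j = p g), q j) *
            (((univ : Finset (Fin m)).erase (p g)).sup' hne' r) / r (p g)) :=
  hie_multiplicative_gain_general q r p g hne hne' hq0 hq1 hmax hD hqg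
end

section
/- Let Q, R be probability vectors with parent map p, positive denominator D, and suppose every coarse class k with z_k = ∑_{j:p(j)=k} q_j > 0 satisfies r_k > 0. Then the KL divergence from S to Q decomposes as: KL is finite and ∑_i s_i log(s_i / q_i) = ∑_k (z_k r_k / D) log(r_k / D), where s_i = q_i r_{p(i)} / D; i.e., the information added by the ensemble depends only on subtree masses and coarse probabilities. -/
/-! Writing `s i = q i * (r (p i) / D)`, the ratio `s i / q i` is `r (p i) / D` wherever `q i ≠ 0`,
and the term vanishes where `q i = 0`; grouping the sum over the fibres of `p` gives the right side. -/

open Finset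

lemma mul_log_mul_div_cancel_left (q c : ℝ) :
    q * c * Real.log (q * c / q) = q * c * Real.log c := by
  rcases eq_or_ne q 0 with hq | hq
  · simp [hq]
  · rw [mul_div_cancel_left₀ c hq]

lemma sum_mul_comp_eq_sum_fiber_mul {ι κ R : Type*} [Fintype ι] [Fintype κ] [DecidableEq κ]
    [CommSemiring R] (q : ι → R) (p : ι → κ) (φ : κ → R) :
    ∑ i, q i * φ (p i) = ∑ k, (∑ j ∈ univ.filter (fun j => p j = k), q j) * φ k := by
  rw [← sum_fiberwise univ p]
  refine sum_congr rfl fun k _ => ?_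
  rw [sum_mul]
  exact sum_congr rfl fun j hj => by rw [(mem_filter.mp hj).2]

theorem hie_kl_decomposition_general {n m : ℕ} (q : Fin n → ℝ) (r : Fin m → ℝ)
    (p : Fin n → Fin m) :
    ∑ i, (q i * r (p i) / (∑ j, q j * r (p j))) *
        Real.log ((q i * r (p i) / (∑ j, q j * r (p j))) / q i) =
      ∑ k, ((∑ j ∈ univ.filter (fun j => p j = k), q j) * r k /
          (∑ j, q j * r (p j))) *
        Real.log (r k / (∑ j, q j * r (p j))) := by
  set D := ∑ j, q j * r (p j)
  calc _ = ∑ i, q i * (r (p i) / D * Real.log (r (p i) / D)) :=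
        sum_congr rfl fun i _ => by
          rw [mul_div_assoc, mul_log_mul_div_cancel_left, mul_assoc]
    _ = _ := sum_mul_comp_eq_sum_fiber_mul q p fun k => r k / D * Real.log (r k / D)
    _ = _ := sum_congr rfl fun k _ => by rw [mul_div_assoc, mul_assoc]

theorem hie_kl_decomposition {n m : ℕ} (q : Fin n → ℝ) (r : Fin m → ℝ)
    (p : Fin n → Fin m)
    (hq0 : ∀ j, 0 ≤ q j) (hr0 : ∀ k, 0 ≤ r k)
    (hq1 : ∑ j, q j = 1) (hr1 : ∑ k, r k = 1)
    (hD : 0 < ∑ j, q j * r (p j))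
    (hsupp : ∀ k, 0 < ∑ j ∈ univ.filter (fun j => p j = k), q j → 0 < r k) :
    ∑ i, (q i * r (p i) / (∑ j, q j * r (p j))) *
        Real.log ((q i * r (p i) / (∑ j, q j * r (p j))) / q i) =
      ∑ k, ((∑ j ∈ univ.filter (fun j => p j = k), q j) * r k /
          (∑ j, q j * r (p j))) *
        Real.log (r k / (∑ j, q j * r (p j))) :=
  hie_kl_decomposition_general q r p
end
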